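/- arXiv:1004.4423 — 6 statements merged into one kernel-verified Lean document; each statement's English description precedes it below -/
import Mathlib

section
/- The Alexander quandle Alex(M,T) (with operation a*b = T(a) + (1-T)(b)) is connected (i.e., the group of inner automorphisms generated by the maps σ_b(a) = a*b acts transitively on M) if and only if 1 - T is surjective on M. -/
/-- The Alexander quandle `Alex(M,T)` (operation `a*b = T a + (1-T) b`) is connected,
i.e. the subgroup of permutations generated by the right translations
`σ_b : a ↦ T a + (b - T b)` acts transitively on `M`, if and only if
`1 - T` is surjective. -/
theorem stmt_1 {M : Type*} [AddCommGroup M] (T : M ≃+ M) :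
    (∀ a c : M,
      ∃ g ∈ Subgroup.closure
        (Set.range fun b : M => (T.toEquiv.trans (Equiv.addRight (b - T b)) : Equiv.Perm M)),
        g a = c) ↔ Function.Surjective (fun m : M => m - T m) := by
  set S : Set (Equiv.Perm M) :=
    Set.range fun b : M => (T.toEquiv.trans (Equiv.addRight (b - T b)) : Equiv.Perm M) with hS
  constructor
  · intro h c
    -- the range of 1 - T as an additive subgroup
    set f : M →+ M := AddMonoidHom.id M - T.toAddMonoidHom with hf
    have hfap : ∀ m, f m = m - T m := fun m => rfl
    set N : AddSubgroup M := f.range with hN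
    have key : ∀ g ∈ Subgroup.closure S, ∀ a : M, g a - a ∈ N := by
      intro g hg
      induction hg using Subgroup.closure_induction with
      | mem x hx =>
        obtain ⟨b, rfl⟩ := hx
        intro a
        have : (T.toEquiv.trans (Equiv.addRight (b - T b)) : Equiv.Perm M) a - a
            = f b - f a := by
          simp [hfap]
          abel
        rw [this]
        exact N.sub_mem ⟨b, rfl⟩ ⟨a, rfl⟩
      | one => intro a; simpa using N.zero_mem
      | mul x y hx hy ihx ihy =>
        intro a
        have : (x * y) a - a = (x (y a) - y a) + (y a - a) := by
          simp
        rw [this]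
        exact N.add_mem (ihx _) (ihy _)
      | inv x hx ihx =>
        intro a
        have : (x⁻¹ : Equiv.Perm M) a - a = -(x (x⁻¹ a) - x⁻¹ a) := by
          simp
        rw [this]
        exact N.neg_mem (ihx _)
    obtain ⟨g, hg, hgc⟩ := h 0 c
    have := key g hg 0
    rw [hgc, sub_zero] at this
    obtain ⟨m, hm⟩ := this
    exact ⟨m, hm⟩
  · intro hsurj a c
    obtain ⟨b, hb⟩ := hsurj (c - T a)
    refine ⟨(T.toEquiv.trans (Equiv.addRight (b - T b)) : Equiv.Perm M),
      Subgroup.subset_closure ⟨b, rfl⟩, ?_⟩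
    simp only at hb
    simp [hb]
end

section
/- Let X be a quandle. Then the subgroups C^D_n(X) of the rack chain complex generated by tuples (x₁,…,xₙ) with xᵢ = x_{i+1} for some i form a subcomplex: the rack boundary ∂ maps C^D_n(X) into C^D_{n-1}(X). -/
/-- The `i`-th face `∂¹ᵢ` of the rack complex, lists encoding tuples. -/
def rackFace1 {X : Type*} (act : X → X → X) (l : List X) (i : ℕ) : List X :=
  match l[i]? with
  | some b => (l.take i).map (fun a => act a b) ++ l.drop (i + 1)
  | none => l

/-- The rack boundary `∂ = Σᵢ (-1)ⁱ (∂⁰ᵢ - ∂¹ᵢ)`. -/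
noncomputable def rackBnd {X : Type*} (act : X → X → X) (c : List X →₀ ℤ) : List X →₀ ℤ :=
  c.sum fun l z =>
    ∑ i ∈ Finset.range l.length,
      (Finsupp.single (l.eraseIdx i) ((-1) ^ (i + 1) * z)
        - Finsupp.single (rackFace1 act l i) ((-1) ^ (i + 1) * z))

/-- A tuple is degenerate if two consecutive entries coincide. -/
def Degenerate {X : Type*} (l : List X) : Prop :=
  ∃ (l₁ : List X) (a : X) (l₂ : List X), l = l₁ ++ a :: a :: l₂

/-! If `l = l₁ ++ a :: a :: l₂` and `k = l₁.length`, the faces of `l` at `k` and `k + 1` agree: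
deleting either copy of `a` gives `l₁ ++ a :: l₂`, and acting by either copy gives
`l₁.map (· * a) ++ a :: l₂` since `a * a = a`. They enter `∂` with opposite signs and cancel.
Every other face keeps two equal neighbours (for an index right of the pair both copies become
`a * b`), so it is again degenerate. -/

section RackFace

variable {X : Type*} (act : X → X → X)

theorem rackFace1_of_getElem?_eq_some {l : List X} {i : ℕ} {b : X} (h : l[i]? = some b) :
    rackFace1 act l i = (l.take i).map (act · b) ++ l.drop (i + 1) := by
  simp [rackFace1, h]

theorem rackFace1_length_append_cons (l₁ l₂ : List X) (a : X) :
    rackFace1 act (l₁ ++ a :: l₂) l₁.length = l₁.map (act · a) ++ l₂ := by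
  rw [rackFace1_of_getElem?_eq_some act (b := a) (by simp)]
  simp

theorem rackFace1_append_of_lt_length {l₁ : List X} {i : ℕ} (hi : i < l₁.length) (l₂ : List X) :
    rackFace1 act (l₁ ++ l₂) i = rackFace1 act l₁ i ++ l₂ := by
  have hget : l₁[i]? = some l₁[i] := List.getElem?_eq_getElem hi
  rw [rackFace1_of_getElem?_eq_some act hget,
    rackFace1_of_getElem?_eq_some act ((List.getElem?_append_left hi).trans hget)]
  simp [List.take_append, List.drop_append, Nat.sub_eq_zero_of_le hi.le,
    Nat.sub_eq_zero_of_le (Nat.succ_le_of_lt hi)]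

theorem rackFace1_length_add_append (l₁ : List X) {l₂ : List X} {j : ℕ} {b : X}
    (hb : l₂[j]? = some b) :
    rackFace1 act (l₁ ++ l₂) (l₁.length + j) = l₁.map (act · b) ++ rackFace1 act l₂ j := by
  have hget : (l₁ ++ l₂)[l₁.length + j]? = some b := by
    rw [List.getElem?_append_right (Nat.le_add_right _ _), Nat.add_sub_cancel_left, hb]
  rw [rackFace1_of_getElem?_eq_some act hget, rackFace1_of_getElem?_eq_some act hb]
  simp [List.take_append, List.drop_append, Nat.add_assoc, List.take_of_length_le,
    List.drop_eq_nil_of_le]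

end RackFace

section DegenerateFaces

variable {X : Type*} (act : X → X → X) (l₁ l₂ : List X) (a : X)

theorem eraseIdx_length_append_cons_cons :
    (l₁ ++ a :: a :: l₂).eraseIdx l₁.length = (l₁ ++ a :: a :: l₂).eraseIdx (l₁.length + 1) := by
  simp [List.eraseIdx_append_of_length_le]

theorem rackFace1_length_append_cons_cons (hidem : act a a = a) :
    rackFace1 act (l₁ ++ a :: a :: l₂) l₁.length
      = rackFace1 act (l₁ ++ a :: a :: l₂) (l₁.length + 1) := by
  have hsplit : l₁ ++ a :: a :: l₂ = (l₁ ++ [a]) ++ a :: l₂ := by simp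
  have hlen : l₁.length + 1 = (l₁ ++ [a]).length := by simp
  rw [rackFace1_length_append_cons, hsplit, hlen, rackFace1_length_append_cons]
  simp [hidem]

variable {l₁ l₂ a}

theorem degenerate_eraseIdx_of_lt {i : ℕ} (hi : i < l₁.length) :
    Degenerate ((l₁ ++ a :: a :: l₂).eraseIdx i) := by
  rw [List.eraseIdx_append_of_lt_length hi]
  exact ⟨_, _, _, rfl⟩

theorem degenerate_rackFace1_of_lt {i : ℕ} (hi : i < l₁.length) :
    Degenerate (rackFace1 act (l₁ ++ a :: a :: l₂) i) := by
  rw [rackFace1_append_of_lt_length act hi]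
  exact ⟨_, _, _, rfl⟩

theorem degenerate_eraseIdx_length_add_two_add (j : ℕ) :
    Degenerate ((l₁ ++ a :: a :: l₂).eraseIdx (l₁.length + 2 + j)) := by
  rw [List.eraseIdx_append_of_length_le (by omega), Nat.add_assoc, Nat.add_sub_cancel_left,
    Nat.add_comm, List.eraseIdx_cons_succ, List.eraseIdx_cons_succ]
  exact ⟨_, _, _, rfl⟩

theorem degenerate_rackFace1_length_add_two_add {j : ℕ} (hj : j < l₂.length) :
    Degenerate (rackFace1 act (l₁ ++ a :: a :: l₂) (l₁.length + 2 + j)) := by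
  obtain ⟨b, hb⟩ : ∃ b, l₂[j]? = some b := ⟨_, List.getElem?_eq_getElem hj⟩
  have hb' : (a :: a :: l₂)[2 + j]? = some b := by
    rw [Nat.add_comm, List.getElem?_cons_succ, List.getElem?_cons_succ, hb]
  have hsplit : a :: a :: l₂ = [a, a] ++ l₂ := rfl
  rw [Nat.add_assoc, rackFace1_length_add_append act l₁ hb', hsplit,
    show 2 + j = [a, a].length + j from rfl, rackFace1_length_add_append act [a, a] hb]
  exact ⟨_, _, _, rfl⟩

end DegenerateFaces

section Chains

variable {X : Type*} (act : X → X → X)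

noncomputable def rackBndSummand (l : List X) (i : ℕ) : List X →₀ ℤ :=
  Finsupp.single (l.eraseIdx i) ((-1) ^ (i + 1))
    - Finsupp.single (rackFace1 act l i) ((-1) ^ (i + 1))

theorem rackBnd_single_one (l : List X) :
    rackBnd act (Finsupp.single l 1) = ∑ i ∈ Finset.range l.length, rackBndSummand act l i := by
  rw [rackBnd, Finsupp.sum_single_index (by simp)]
  simp only [mul_one, rackBndSummand]

theorem rackBndSummand_add_succ_eq_zero {l : List X} {i : ℕ}
    (herase : l.eraseIdx i = l.eraseIdx (i + 1))
    (hface : rackFace1 act l i = rackFace1 act l (i + 1)) :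
    rackBndSummand act l i + rackBndSummand act l (i + 1) = 0 := by
  rw [rackBndSummand, rackBndSummand, herase, hface, pow_succ _ (i + 1), mul_neg_one,
    Finsupp.single_neg, Finsupp.single_neg]
  abel

variable (X) in
noncomputable def degenerateChains : AddSubgroup (List X →₀ ℤ) :=
  AddSubgroup.closure {c | ∃ l : List X, Degenerate l ∧ c = Finsupp.single l 1}

theorem single_mem_degenerateChains {l : List X} (hl : Degenerate l) (z : ℤ) :
    Finsupp.single l z ∈ degenerateChains X := by
  rw [← mul_one z, ← smul_eq_mul, ← Finsupp.smul_single]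
  exact AddSubgroup.zsmul_mem _ (AddSubgroup.subset_closure (by exact ⟨l, hl, rfl⟩)) z

theorem rackBndSummand_mem_degenerateChains {l : List X} {i : ℕ}
    (herase : Degenerate (l.eraseIdx i)) (hface : Degenerate (rackFace1 act l i)) :
    rackBndSummand act l i ∈ degenerateChains X :=
  sub_mem (single_mem_degenerateChains herase _) (single_mem_degenerateChains hface _)

end Chains

theorem stmt_4_general {X : Type*} (act : X → X → X)
    (hidem : ∀ a : X, act a a = a) :
    ∀ l : List X, Degenerate l →
      rackBnd act (Finsupp.single l 1) ∈
        AddSubgroup.closure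
          {c : List X →₀ ℤ | ∃ l' : List X, Degenerate l' ∧ c = Finsupp.single l' 1} := by
  rintro _ ⟨l₁, a, l₂, rfl⟩
  have hlen : (l₁ ++ a :: a :: l₂).length = l₁.length + 2 + l₂.length := by simp; omega
  have hcancel := rackBndSummand_add_succ_eq_zero act (eraseIdx_length_append_cons_cons l₁ l₂ a)
    (rackFace1_length_append_cons_cons act l₁ l₂ a (hidem a))
  rw [rackBnd_single_one, hlen, Finset.sum_range_add, Finset.sum_range_succ, Finset.sum_range_succ,
    add_assoc (∑ i ∈ Finset.range l₁.length, rackBndSummand act _ i), hcancel, add_zero]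
  refine add_mem (sum_mem fun i hi => ?_) (sum_mem fun j hj => ?_)
  · rw [Finset.mem_range] at hi
    exact rackBndSummand_mem_degenerateChains act (degenerate_eraseIdx_of_lt hi)
      (degenerate_rackFace1_of_lt act hi)
  · rw [Finset.mem_range] at hj
    exact rackBndSummand_mem_degenerateChains act (degenerate_eraseIdx_length_add_two_add _)
      (degenerate_rackFace1_length_add_two_add act hj)

/-- For a quandle `X`, the degenerate tuples span a subcomplex of the rack complex:
the boundary of a degenerate tuple lies in the subgroup generated by degenerate tuples. -/
theorem stmt_4 {X : Type*} (act : X → X → X)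
    (hbij : ∀ b : X, Function.Bijective fun a => act a b)
    (hdist : ∀ a b c : X, act (act a b) c = act (act a c) (act b c))
    (hidem : ∀ a : X, act a a = a) :
    ∀ l : List X, Degenerate l →
      rackBnd act (Finsupp.single l 1) ∈
        AddSubgroup.closure
          {c : List X →₀ ℤ | ∃ l' : List X, Degenerate l' ∧ c = Finsupp.single l' 1} :=
  stmt_4_general act hidem
end

section
/- In the setting of an augmented rack with G acting on Y, the pairing μ is associative: μ_Y(μ_Y(η⊗γ)⊗γ') = μ_Y(η⊗μ_G(γ⊗γ')) for chains η ∈ C_m(Y;X), γ ∈ C_k(G;X), γ' ∈ C_l(G;X). -/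
/-- An augmented rack `(X, G, η, ρ)`. -/
structure AugmentedRack (X G : Type*) [Group G] where
  act : X → X → X
  act_bij : ∀ b : X, Function.Bijective fun a => act a b
  act_dist : ∀ a b c : X, act (act a b) c = act (act a c) (act b c)
  rho : X → G → X
  rho_one : ∀ a : X, rho a 1 = a
  rho_mul : ∀ (a : X) (g h : G), rho (rho a g) h = rho a (g * h)
  rho_hom : ∀ (a b : X) (g : G), rho (act a b) g = act (rho a g) (rho b g)
  eta : X → G
  eta_cond : ∀ (a : X) (g : G), eta (rho a g) = g⁻¹ * eta a * g

/-- The pairing `μ_Y((y;x₁,…,x_m) ⊗ (g;x'₁,…,x'_k)) = (yg; x₁g,…,x_mg, x'₁,…,x'_k)`,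
extended bilinearly (with `μ_G` the special case `Y = G`). -/
noncomputable def muPair {Y X G : Type*} (smul : Y → G → Y) (rho : X → G → X)
    (a : (Y × List X) →₀ ℤ) (b : (G × List X) →₀ ℤ) : (Y × List X) →₀ ℤ :=
  a.sum fun q z => b.sum fun r w =>
    Finsupp.single (smul q.1 r.1, q.2.map (fun x => rho x r.1) ++ r.2) (z * w)

/-! The pairing is the bilinear extension of `(y; xs) ⋆ (g; xs') = (y g; xs g, xs')`, so it
suffices to check associativity on basis chains. There both `((y; xs) ⋆ (g; xs')) ⋆ (h; xs'')` and
`(y; xs) ⋆ ((g; xs') ⋆ (h; xs''))` equal `(y g h; xs g h, xs' h, xs'')`, because `ρ` and `smul`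
are right actions of `G`. -/

noncomputable def linearize₂ {α β γ : Type*} (f : α → β → γ) (a : α →₀ ℤ) (b : β →₀ ℤ) :
    γ →₀ ℤ :=
  a.sum fun p z => b.sum fun q w => Finsupp.single (f p q) (z * w)

namespace linearize₂

variable {α β γ : Type*} (f : α → β → γ)

@[simp]
lemma zero_left (b : β →₀ ℤ) : linearize₂ f 0 b = 0 := by
  simp [linearize₂]

@[simp]
lemma zero_right (a : α →₀ ℤ) : linearize₂ f a 0 = 0 := by
  simp [linearize₂]

lemma add_left (a a' : α →₀ ℤ) (b : β →₀ ℤ) :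
    linearize₂ f (a + a') b = linearize₂ f a b + linearize₂ f a' b := by
  unfold linearize₂
  apply Finsupp.sum_add_index' <;> intro p <;>
    simp [add_mul, Finsupp.single_add, Finsupp.sum_add]

lemma add_right (a : α →₀ ℤ) (b b' : β →₀ ℤ) :
    linearize₂ f a (b + b') = linearize₂ f a b + linearize₂ f a b' := by
  unfold linearize₂
  rw [← Finsupp.sum_add]
  refine Finsupp.sum_congr fun p _ => ?_
  apply Finsupp.sum_add_index' <;> intro q <;> simp [mul_add, Finsupp.single_add]

@[simp]
lemma single_single (p : α) (z : ℤ) (q : β) (w : ℤ) :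
    linearize₂ f (Finsupp.single p z) (Finsupp.single q w) = Finsupp.single (f p q) (z * w) := by
  simp [linearize₂]

end linearize₂

theorem linearize₂_assoc {α β : Type*} (f : α → β → α) (g : β → β → β)
    (h : ∀ p q r, f (f p q) r = f p (g q r)) (a : α →₀ ℤ) (b c : β →₀ ℤ) :
    linearize₂ f (linearize₂ f a b) c = linearize₂ f a (linearize₂ g b c) := by
  induction a using Finsupp.induction_linear with
  | zero => simp
  | add a a' ha ha' => simp only [linearize₂.add_left, ha, ha']
  | single p z =>
    induction b using Finsupp.induction_linear with
    | zero => simp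
    | add b b' hb hb' => simp only [linearize₂.add_left, linearize₂.add_right, hb, hb']
    | single q w =>
      induction c using Finsupp.induction_linear with
      | zero => simp
      | add c c' hc hc' => simp only [linearize₂.add_right, hc, hc']
      | single r u => simp only [linearize₂.single_single, h, mul_assoc]

section ChainAction

variable {Y X G : Type*} (smul : Y → G → Y) (rho : X → G → X)

def chainAct (q : Y × List X) (r : G × List X) : Y × List X :=
  (smul q.1 r.1, q.2.map (fun x => rho x r.1) ++ r.2)

lemma muPair_eq_linearize₂ : muPair smul rho = linearize₂ (chainAct smul rho) := rfl

lemma chainAct_chainAct [Mul G] (rho_mul : ∀ (x : X) (g h : G), rho (rho x g) h = rho x (g * h))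
    (smul_mul : ∀ (y : Y) (g h : G), smul (smul y g) h = smul y (g * h))
    (p : Y × List X) (q r : G × List X) :
    chainAct smul rho (chainAct smul rho p q) r =
      chainAct smul rho p (chainAct (fun g h : G => g * h) rho q r) := by
  simp [chainAct, smul_mul, rho_mul]

end ChainAction

theorem stmt_8_general {X G Y : Type*} [Group G] (R : AugmentedRack X G)
    (smul : Y → G → Y)
    (hsmul_mul : ∀ (y : Y) (g h : G), smul (smul y g) h = smul y (g * h))
    (a : (Y × List X) →₀ ℤ) (b c : (G × List X) →₀ ℤ) :
    muPair smul R.rho (muPair smul R.rho a b) c =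
      muPair smul R.rho a (muPair (fun g h : G => g * h) R.rho b c) := by
  simp only [muPair_eq_linearize₂]
  exact linearize₂_assoc _ _ (chainAct_chainAct smul R.rho R.rho_mul hsmul_mul) a b c

/-- Associativity: `μ_Y(μ_Y(η⊗γ)⊗γ') = μ_Y(η⊗μ_G(γ⊗γ'))`. -/
theorem stmt_8 {X G Y : Type*} [Group G] (R : AugmentedRack X G)
    (smul : Y → G → Y)
    (hsmul_one : ∀ y : Y, smul y 1 = y)
    (hsmul_mul : ∀ (y : Y) (g h : G), smul (smul y g) h = smul y (g * h))
    (a : (Y × List X) →₀ ℤ) (b c : (G × List X) →₀ ℤ) :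
    muPair smul R.rho (muPair smul R.rho a b) c =
      muPair smul R.rho a (muPair (fun g h : G => g * h) R.rho b c) :=
  stmt_8_general R smul hsmul_mul a b c
end

section
/- Let Q : C^n → C^{n+1} be defined by Q(F) = P(F) + (-1)^{n+1} F∪Λ, where P satisfies the graded Rota–Baxter identity PF∪PG = P(F∪PG)+(-1)^{k+1}P(PF∪G), Λ = P(𝟏), and Λ∪Λ = 0. Then Q² = 0. -/
/-- Let `Q F = P F + (-1)^{n+1} F∪Λ` for `F` of degree `n`, where `P` is a graded
Rota–Baxter operator, `Λ = P(𝟏)`, and `Λ∪Λ = 0`.  Then `Q² = 0`. -/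
theorem stmt_12 {A : Type*} [Ring A]
    (ℳ : ℕ → AddSubgroup A) (hone : (1 : A) ∈ ℳ 0) (P : A → A)
    (hPadd : ∀ a b : A, P (a + b) = P a + P b)
    (hPdeg : ∀ k : ℕ, ∀ a ∈ ℳ k, P a ∈ ℳ (k + 1))
    (hmul : ∀ k m : ℕ, ∀ a ∈ ℳ k, ∀ b ∈ ℳ m, a * b ∈ ℳ (k + m))
    (hRB : ∀ (k : ℕ) (F G : A), F ∈ ℳ k →
      P F * P G = P (F * P G) + ((-1 : ℤ) ^ (k + 1)) • P (P F * G))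
    (hΛ : P 1 * P 1 = 0)
    (n : ℕ) (F : A) (hF : F ∈ ℳ n) :
    P (P F + ((-1 : ℤ) ^ (n + 1)) • (F * P 1)) +
        ((-1 : ℤ) ^ (n + 2)) •
          ((P F + ((-1 : ℤ) ^ (n + 1)) • (F * P 1)) * P 1) = 0 := by
  set e : ℤ := (-1 : ℤ) ^ (n + 1) with hedef
  have he2 : e * e = 1 := by
    rw [hedef, ← pow_add]
    exact Even.neg_one_pow ⟨n + 1, by ring⟩
  have he3 : ((-1 : ℤ) ^ (n + 2)) = -e := by rw [hedef]; ring
  let P' : A →+ A := AddMonoidHom.mk' P hPadd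
  have hz : ∀ (m : ℤ) (x : A), P (m • x) = m • P x := fun m x => map_zsmul P' m x
  have h := hRB n F 1 hF
  rw [mul_one] at h
  have h2 : F * P 1 * P 1 = 0 := by rw [mul_assoc, hΛ, mul_zero]
  have h3 : (e • (F * P 1)) * P 1 = 0 := by rw [smul_mul_assoc, h2, smul_zero]
  rw [he3, hPadd, hz, add_mul, h3, add_zero, h, smul_add, neg_smul, neg_smul,
    smul_smul, he2, one_smul]
  abel
end

section
/- For q = p^e and p prime, the multinomial coefficient c = (pq-1)! / ((q!)^{p-1} · (q-1)!) is an integer not divisible by p. -/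
/-!
The denominator divides `(pq-1)!` because `n!^k m! ∣ (kn+m)!`, one factor `n!` at a time.
For `p ∤ c` compare `p`-adic valuations, writing `V = v_p(q!)`: from `(pq)! = pq·(pq-1)!` and
`v_p((pq)!) = V + q` the numerator has valuation `V + q - (e+1)`; from `q! = q·(q-1)!` the
denominator has valuation `(p-1)V + V - e`; and Legendre's formula `(p-1)V = q - s_p(q) = q - 1`
(`s_p` the base-`p` digit sum) makes the two equal.
-/

open scoped Nat

theorem Nat.factorial_pow_mul_factorial_dvd_factorial (n m k : ℕ) :
    n ! ^ k * m ! ∣ (k * n + m)! := by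
  induction k with
  | zero => simp
  | succ k ih =>
    calc n ! ^ (k + 1) * m ! = n ! * (n ! ^ k * m !) := by ring
      _ ∣ n ! * (k * n + m)! := mul_dvd_mul_left _ ih
      _ ∣ (n + (k * n + m))! := Nat.factorial_mul_factorial_dvd_factorial_add _ _
      _ = ((k + 1) * n + m)! := by ring_nf

section padicValNat

variable {p : ℕ} [hp : Fact p.Prime]

theorem sub_one_mul_padicValNat_factorial_prime_pow (e : ℕ) :
    (p - 1) * padicValNat p (p ^ e)! = p ^ e - 1 := by
  have hdigits : p.digits (p ^ e) = List.replicate e 0 ++ [1] := by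
    simpa [Nat.digits_of_lt p 1 one_ne_zero hp.out.one_lt] using
      Nat.digits_base_pow_mul (k := e) hp.out.one_lt one_pos
  simp [sub_one_mul_padicValNat_factorial, hdigits]

theorem padicValNat_factorial_of_ne_zero {n : ℕ} (hn : n ≠ 0) :
    padicValNat p n ! = padicValNat p n + padicValNat p (n - 1)! := by
  rw [← Nat.mul_factorial_pred hn, padicValNat.mul hn (Nat.factorial_ne_zero _)]

theorem not_dvd_div_of_padicValNat_eq {a b : ℕ} (ha : a ≠ 0) (hba : b ∣ a)
    (hv : padicValNat p a = padicValNat p b) : ¬ p ∣ a / b := by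
  have hquot : a / b ≠ 0 := (Nat.div_pos (Nat.le_of_dvd (Nat.pos_of_ne_zero ha) hba)
    (Nat.pos_of_dvd_of_pos hba (Nat.pos_of_ne_zero ha))).ne'
  have hzero : padicValNat p (a / b) = 0 := by
    rw [padicValNat.div_of_dvd hba, hv, Nat.sub_self]
  simpa [hp.out.one_lt.ne', hquot] using padicValNat.eq_zero_iff.mp hzero

end padicValNat

/-- For `q = p^e` with `p` prime, the multinomial coefficient
`c = (pq-1)! / ((q!)^{p-1} (q-1)!)` is an integer not divisible by `p`. -/
theorem stmt_16 (p e : ℕ) (hp : p.Prime) (q : ℕ) (hq : q = p ^ e) :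
    (Nat.factorial q ^ (p - 1) * Nat.factorial (q - 1)) ∣ Nat.factorial (p * q - 1) ∧
    ¬ p ∣ Nat.factorial (p * q - 1) /
        (Nat.factorial q ^ (p - 1) * Nat.factorial (q - 1)) := by
  have : Fact p.Prime := ⟨hp⟩
  subst hq
  have hq0 : p ^ e ≠ 0 := pow_ne_zero _ hp.ne_zero
  have hdvd : (p ^ e)! ^ (p - 1) * (p ^ e - 1)! ∣ (p * p ^ e - 1)! := by
    convert Nat.factorial_pow_mul_factorial_dvd_factorial (p ^ e) (p ^ e - 1) (p - 1) using 2
    have := Nat.one_le_pow e p hp.pos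
    have := Nat.le_mul_of_pos_left (p ^ e) hp.pos
    rw [Nat.sub_one_mul]
    omega
  refine ⟨hdvd, not_dvd_div_of_padicValNat_eq (Nat.factorial_ne_zero _) hdvd ?_⟩
  have hnum := padicValNat_factorial_of_ne_zero (p := p) (mul_ne_zero hp.ne_zero hq0)
  have hden := padicValNat_factorial_of_ne_zero (p := p) hq0
  have hlegendre := sub_one_mul_padicValNat_factorial_prime_pow (p := p) e
  rw [padicValNat_factorial_mul, ← pow_succ', padicValNat.prime_pow] at hnum
  rw [padicValNat.prime_pow] at hden
  rw [padicValNat.mul (pow_ne_zero _ (Nat.factorial_ne_zero _)) (Nat.factorial_ne_zero _),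
    padicValNat.pow, ← pow_succ']
  omega
end

section
/- In a divided power system over a commutative ring, i.e., elements A_m (m ≥ 0, A_0 = 1) with A_k·A_m = C(k+m, k)·A_{k+m}, the elements defined by A_{q·j + r} := ((q!)^j · r! / (qj+r)!) · (A_q)^j · A_r for 0 ≤ r < q reproduce the divided power relations, provided the displayed rational coefficients lie in the ring: specifically, over F_p with q = p^e, if A_m for m < q satisfy divided-power relations with (A_{p^f})^p = 0 for f < e, then the A_m so defined satisfy A_{m₁}A_{m₂} = C(m₁+m₂, m₁) A_{m₁+m₂} whenever m₁+m₂ < p·q. -/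
/-!
Write `m = q j + r` with `r < q = p ^ e`. The coefficient `m! / ((q!)^j r!)` is a multinomial
coefficient, and for `m < p q` it is prime to `p` by Legendre's formula: for `1 ≤ i ≤ e` we have
`p ^ i ∣ q`, so `⌊m / p^i⌋ = j ⌊q / p^i⌋ + ⌊r / p^i⌋`. If `r₁ + r₂ < q`, the relation for `B`
reduces to the one for `A'` and an identity between factorials. If `r₁ + r₂ ≥ q`, both sides
vanish: `A'_{r₁} A'_{r₂} = 0`, and adding `m₁` and `m₂` in base `p` carries at digit `e`, so
`p ∣ C(m₁ + m₂, m₁)` by Kummer's theorem.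
-/

open Nat

-- For `m = q j + r` with `r < q`, this is `(q j + r)! / ((q!)^j r!)`, the inverse of the paper's
-- coefficient `(q!)^j r! / (q j + r)!`.
def blockMultinomial (q m : ℕ) : ℕ := m ! / (q ! ^ (m / q) * (m % q)!)

theorem factorial_pow_mul_factorial_dvd (q j r : ℕ) : q ! ^ j * r ! ∣ (q * j + r)! := by
  induction j with
  | zero => simp
  | succ j ih =>
    calc q ! ^ (j + 1) * r ! = q ! ^ j * r ! * q ! := by ring
      _ ∣ (q * j + r)! * q ! := mul_dvd_mul_right ih _
      _ ∣ (q * j + r + q)! := factorial_mul_factorial_dvd_factorial_add _ _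
      _ = (q * (j + 1) + r)! := by ring_nf

theorem blockMultinomial_mul (q m : ℕ) :
    blockMultinomial q m * (q ! ^ (m / q) * (m % q)!) = m ! := by
  refine Nat.div_mul_cancel ?_
  simpa only [div_add_mod] using factorial_pow_mul_factorial_dvd q (m / q) (m % q)

theorem cast_blockMultinomial {K : Type*} [Field K] [CharZero K] (q m : ℕ) :
    (blockMultinomial q m : K) = m ! / (q ! ^ (m / q) * (m % q)! : ℕ) := by
  rw [eq_div_iff (Nat.cast_ne_zero.mpr (by positivity)), ← Nat.cast_mul, blockMultinomial_mul]

theorem blockMultinomial_add_mul_choose {q m₁ m₂ : ℕ} (h : m₁ % q + m₂ % q < q) :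
    blockMultinomial q (m₁ + m₂) * (m₁ % q + m₂ % q).choose (m₁ % q) =
      (m₁ + m₂).choose m₁ * (blockMultinomial q m₁ * blockMultinomial q m₂) := by
  apply Nat.cast_injective (R := ℚ)
  push_cast [cast_blockMultinomial, add_div_eq_of_add_mod_lt h, add_mod_of_add_mod_lt h,
    cast_choose ℚ (le_add_right _ _ : m₁ % q ≤ _), cast_choose ℚ (le_add_right _ _ : m₁ ≤ _)]
  simp only [Nat.add_sub_cancel_left]
  field_simp
  ring

theorem padicValNat_factorial_pow_mul_add {p e j r : ℕ} [hp : Fact p.Prime]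
    (hj : j < p) (hr : r < p ^ e) :
    padicValNat p (p ^ e * j + r)! = j * padicValNat p (p ^ e)! + padicValNat p r ! := by
  have hlog : ∀ n < p ^ (e + 1), log p n < e + 1 := fun n => log_lt_of_lt_pow' (succ_ne_zero e)
  have hpe : p ^ e < p ^ (e + 1) := pow_lt_pow_right₀ hp.out.one_lt (lt_add_one e)
  have hm : p ^ e * j + r < p ^ (e + 1) := by
    calc p ^ e * j + r < p ^ e * j + p ^ e := by omega
      _ = p ^ e * (j + 1) := by ring
      _ ≤ p ^ e * p := Nat.mul_le_mul_left _ hj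
      _ = p ^ (e + 1) := (pow_succ p e).symm
  rw [padicValNat_factorial (hlog _ hm), padicValNat_factorial (hlog _ hpe),
    padicValNat_factorial (hlog _ (hr.trans hpe)), Finset.mul_sum, ← Finset.sum_add_distrib]
  refine Finset.sum_congr rfl fun i hi => ?_
  have hsplit : p ^ e = p ^ i * p ^ (e - i) := by
    rw [← pow_add, Nat.add_sub_cancel' (by have := Finset.mem_Ico.mp hi; omega)]
  rw [hsplit, mul_assoc, Nat.mul_add_div (pow_pos hp.out.pos i),
    Nat.mul_div_cancel_left _ (pow_pos hp.out.pos i), mul_comm j]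

theorem not_dvd_blockMultinomial {p e m : ℕ} [hp : Fact p.Prime] (hm : m < p * p ^ e) :
    ¬ p ∣ blockMultinomial (p ^ e) m := by
  have hD : (p ^ e)! ^ (m / p ^ e) * (m % p ^ e)! ≠ 0 := by positivity
  have hc : blockMultinomial (p ^ e) m ≠ 0 := fun h =>
    factorial_ne_zero m (by simpa [h] using (blockMultinomial_mul (p ^ e) m).symm)
  have hval := congrArg (padicValNat p) (blockMultinomial_mul (p ^ e) m)
  conv_rhs at hval => rw [← div_add_mod m (p ^ e)]
  rw [padicValNat.mul hc hD, padicValNat.mul (by positivity) (by positivity), padicValNat.pow,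
    padicValNat_factorial_pow_mul_add (Nat.div_lt_of_lt_mul (by rwa [mul_comm]))
    (mod_lt _ (pow_pos hp.out.pos e))] at hval
  rw [dvd_iff_padicValNat_ne_zero hc]
  omega

theorem dvd_choose_add_of_pow_le_mod_add_mod {p i k n : ℕ} [hp : Fact p.Prime] (hi : i ≠ 0)
    (h : p ^ i ≤ k % p ^ i + n % p ^ i) : p ∣ (k + n).choose k := by
  have hkn : p ^ i ≤ n + k :=
    (h.trans (Nat.add_le_add (mod_le k _) (mod_le n _))).trans_eq (add_comm k n)
  have hib : i < n + k + 1 :=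
    (Nat.lt_pow_self hp.out.one_lt).trans_le hkn |>.trans (lt_add_one _)
  have hval := padicValNat_choose' (p := p) (k := k) (lt_add_one_of_le (log_le_self p (n + k)))
  rw [add_comm k, dvd_iff_padicValNat_ne_zero (choose_ne_zero (le_add_left k n)), hval]
  exact Finset.card_ne_zero.mpr
    ⟨i, Finset.mem_filter.mpr ⟨Finset.mem_Ico.mpr ⟨one_le_iff_ne_zero.mpr hi, hib⟩, h⟩⟩

theorem stmt_17_general (p : ℕ) [Fact p.Prime] {A : Type*} [CommRing A] [Algebra (ZMod p) A]
    (e q : ℕ) (hq : q = p ^ e)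
    (A' : ℕ → A)
    (hrel : ∀ k m : ℕ, k + m < q →
      A' k * A' m = ((Nat.choose (k + m) k : ZMod p)) • A' (k + m))
    (hrel0 : ∀ k m : ℕ, k < q → m < q → q ≤ k + m → A' k * A' m = 0)
    (Aq : A) (B : ℕ → A)
    (hB : ∀ m : ℕ, B m =
      (((Nat.factorial m /
          (Nat.factorial q ^ (m / q) * Nat.factorial (m % q)) : ℕ) : ZMod p))⁻¹ •
        (Aq ^ (m / q) * A' (m % q))) :
    ∀ m₁ m₂ : ℕ, m₁ + m₂ < p * q →
      B m₁ * B m₂ = ((Nat.choose (m₁ + m₂) m₁ : ZMod p)) • B (m₁ + m₂) := by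
  subst hq
  intro m₁ m₂ hm
  have hB' (m : ℕ) : B m = (blockMultinomial (p ^ e) m : ZMod p)⁻¹ •
      (Aq ^ (m / p ^ e) * A' (m % p ^ e)) := hB m
  have hunit {m : ℕ} (h : m < p * p ^ e) : (blockMultinomial (p ^ e) m : ZMod p) ≠ 0 :=
    (ZMod.natCast_eq_zero_iff _ _).not.mpr (not_dvd_blockMultinomial h)
  have hpos : 0 < p ^ e := pow_pos (Fact.out : p.Prime).pos e
  rw [hB', hB', hB', smul_mul_smul_comm, mul_mul_mul_comm, ← pow_add]
  by_cases hcarry : p ^ e ≤ m₁ % p ^ e + m₂ % p ^ e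
  · have hchoose : ((m₁ + m₂).choose m₁ : ZMod p) = 0 :=
      (ZMod.natCast_eq_zero_iff _ _).mpr <| dvd_choose_add_of_pow_le_mod_add_mod
        (by rintro rfl; rw [pow_zero] at hcarry; omega) hcarry
    rw [hrel0 _ _ (mod_lt _ hpos) (mod_lt _ hpos) hcarry, mul_zero, smul_zero, hchoose, zero_smul]
  · rw [not_le] at hcarry
    have hscalar := congrArg (Nat.cast : ℕ → ZMod p) (blockMultinomial_add_mul_choose hcarry)
    push_cast at hscalar
    rw [hrel _ _ hcarry, mul_smul_comm, smul_smul, smul_smul, add_div_eq_of_add_mod_lt hcarry,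
      add_mod_of_add_mod_lt hcarry]
    congr 1
    have h₁ := hunit (m := m₁) (by omega)
    have h₂ := hunit (m := m₂) (by omega)
    have h := hunit hm
    field_simp
    linear_combination hscalar

/-- Extending a system of divided powers: over an `F_p`-algebra, given divided powers
`A'_m` for `m < q = p^e` (with `A'_k A'_m = 0` for `k + m ≥ q` and `(A'_{p^f})^p = 0`),
and a new element `Aq`, the elements
`B_{qj+r} = ((q!)^j r!/(qj+r)!) · Aq^j · A'_r` satisfy the divided power relations
`B_{m₁} B_{m₂} = C(m₁+m₂, m₁) B_{m₁+m₂}` for `m₁ + m₂ < p·q`. -/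
theorem stmt_17 (p : ℕ) [Fact p.Prime] {A : Type*} [CommRing A] [Algebra (ZMod p) A]
    (e q : ℕ) (hq : q = p ^ e)
    (A' : ℕ → A) (hA0 : A' 0 = 1)
    (hrel : ∀ k m : ℕ, k + m < q →
      A' k * A' m = ((Nat.choose (k + m) k : ZMod p)) • A' (k + m))
    (hrel0 : ∀ k m : ℕ, k < q → m < q → q ≤ k + m → A' k * A' m = 0)
    (hpow : ∀ f : ℕ, f < e → (A' (p ^ f)) ^ p = 0)
    (Aq : A) (B : ℕ → A)
    (hB : ∀ m : ℕ, B m =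
      (((Nat.factorial m /
          (Nat.factorial q ^ (m / q) * Nat.factorial (m % q)) : ℕ) : ZMod p))⁻¹ •
        (Aq ^ (m / q) * A' (m % q))) :
    ∀ m₁ m₂ : ℕ, m₁ + m₂ < p * q →
      B m₁ * B m₂ = ((Nat.choose (m₁ + m₂) m₁ : ZMod p)) • B (m₁ + m₂) :=
  stmt_17_general p e q hq A' hrel hrel0 Aq B hB
end
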